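/- arXiv:0804.3150 — 2 statements merged into one kernel-verified Lean document; each statement's English description precedes it below -/
import Mathlib

section
/- Let A be a k-linear triangulated category with Serre functor S_A, and B a right admissible full triangulated subcategory with inclusion j_* and right adjoint j^!, such that B has a Serre functor S_B. Then the functor j^* = S_B^{-1} ∘ j^! ∘ S_A is a left adjoint of j_*, i.e. Hom_A(a, j_* b) ≅ Hom_B(j^* a, b) naturally. -/
/-!
STATEMENT 2: If `A` is `k`-linear triangulated with Serre functor `S_A`, `B` right
admissible with inclusion `j` and right adjoint `R = j^!`, and `S_B = j^! S_A j` is a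
Serre functor on `B` (with quasi-inverse given by an equivalence `e`), then
`j^* = S_B⁻¹ ∘ j^! ∘ S_A` is a left adjoint of `j`.
-/

open CategoryTheory

universe v u u'

/-- A Serre functor on a `k`-linear category: an equivalence `S` with binatural
isomorphisms `Hom(a,b) ≅ Hom(b, S a)*`. -/
structure SerreStructure (k : Type v) [Field k] (C : Type u) [Category.{v} C]
    [Preadditive C] [Linear k C] where
  S : C ⥤ C
  additive : S.Additive
  linear : S.Linear k
  isEquivalence : S.IsEquivalence
  φ : ∀ a b : C, (a ⟶ b) ≃ₗ[k] Module.Dual k (b ⟶ S.obj a)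
  nat_left : ∀ {a a' b : C} (u : a' ⟶ a) (f : a ⟶ b) (g : b ⟶ S.obj a'),
    φ a' b (u ≫ f) g = φ a b f (g ≫ S.map u)
  nat_right : ∀ {a b b' : C} (f : a ⟶ b) (v : b ⟶ b') (g : b' ⟶ S.obj a),
    φ a b' (f ≫ v) g = φ a b f (v ≫ g)

namespace SerreAux

variable {k : Type v} [Field k]
  {A : Type u} [Category.{v} A] [Preadditive A] [Linear k A]
  [∀ a b : A, FiniteDimensional k (a ⟶ b)]
  {B : Type u'} [Category.{v} B] [Preadditive B] [Linear k B]
  (j : B ⥤ A) [j.Full] [j.Faithful]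
  (R : A ⥤ B) (adj : j ⊣ R) (SA : SerreStructure k A)

/-- The Serre duality viewed contravariantly: `Hom(x, S y) ≃ Hom(y, x)*`. -/
noncomputable def serreDual (x y : A) :
    (x ⟶ SA.S.obj y) ≃ₗ[k] Module.Dual k (y ⟶ x) :=
  (Module.evalEquiv k (x ⟶ SA.S.obj y)).trans (SA.φ y x).dualMap

lemma serreDual_apply (x y : A) (g : x ⟶ SA.S.obj y) (f : y ⟶ x) :
    serreDual SA x y g f = SA.φ y x f g := rfl

lemma phi_ext {x y : A} {X Y : x ⟶ SA.S.obj y}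
    (h : ∀ f : y ⟶ x, SA.φ y x f X = SA.φ y x f Y) : X = Y :=
  (serreDual SA x y).injective (LinearMap.ext fun f => by
    rw [serreDual_apply, serreDual_apply]; exact h f)

lemma rawCompCounit_apply (a : A) (b : B)
    (h : j.obj b ⟶ j.obj (R.obj (SA.S.obj a))) :
    ((Functor.FullyFaithful.ofFullyFaithful j).homEquiv.symm.trans
      (adj.homEquiv b (SA.S.obj a)).symm) h = h ≫ adj.counit.app (SA.S.obj a) := by
  simp [Adjunction.homEquiv_counit, Functor.FullyFaithful.homEquiv]

/-- Composition with the counit, as a linear equivalence. -/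
noncomputable def compCounit (a : A) (b : B) :
    (j.obj b ⟶ j.obj (R.obj (SA.S.obj a))) ≃ₗ[k] (j.obj b ⟶ SA.S.obj a) :=
  Equiv.toLinearEquiv
    ((Functor.FullyFaithful.ofFullyFaithful j).homEquiv.symm.trans
      (adj.homEquiv b (SA.S.obj a)).symm)
    { map_add := fun h h' => by
        simp only [rawCompCounit_apply]
        rw [Preadditive.add_comp]
      map_smul := fun c h => by
        simp only [rawCompCounit_apply]
        rw [Linear.smul_comp] }

lemma compCounit_apply (a : A) (b : B)
    (h : j.obj b ⟶ j.obj (R.obj (SA.S.obj a))) :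
    compCounit j R adj SA a b h = h ≫ adj.counit.app (SA.S.obj a) :=
  rawCompCounit_apply j R adj SA a b h

/-- The key map `Hom(a, j b) ≃ Hom(j R S_A a, S_A j b)`. -/
noncomputable def phiAB (a : A) (b : B) :
    (a ⟶ j.obj b) ≃ (j.obj (R.obj (SA.S.obj a)) ⟶ SA.S.obj (j.obj b)) :=
  (SA.φ a (j.obj b)).toEquiv.trans
    (((compCounit j R adj SA a b).dualMap.toEquiv).trans
      (serreDual SA (j.obj (R.obj (SA.S.obj a))) (j.obj b)).toEquiv.symm)

lemma phiAB_char (a : A) (b : B) (g : a ⟶ j.obj b)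
    (h : j.obj b ⟶ j.obj (R.obj (SA.S.obj a))) :
    SA.φ (j.obj b) (j.obj (R.obj (SA.S.obj a))) h (phiAB j R adj SA a b g)
      = SA.φ a (j.obj b) g (h ≫ adj.counit.app (SA.S.obj a)) := by
  rw [← serreDual_apply]
  show serreDual SA _ _
    ((serreDual SA _ _).toEquiv.symm
      ((compCounit j R adj SA a b).dualMap.toEquiv ((SA.φ a (j.obj b)).toEquiv g))) h = _
  rw [LinearEquiv.coe_toEquiv_symm]
  erw [LinearEquiv.apply_symm_apply]
  show ((compCounit j R adj SA a b).dualMap (SA.φ a (j.obj b) g)) h = _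
  rw [LinearEquiv.dualMap_apply, compCounit_apply]

variable (E : B ⥤ B) (adj2 : E ⊣ (j ⋙ SA.S ⋙ R))

/-- The full chain `Hom(a, j b) ≃ Hom(E R S_A a, b)`. -/
noncomputable def chain (a : A) (b : B) :
    (a ⟶ j.obj b) ≃ (E.obj (R.obj (SA.S.obj a)) ⟶ b) :=
  (phiAB j R adj SA a b).trans
    ((adj.homEquiv (R.obj (SA.S.obj a)) (SA.S.obj (j.obj b))).trans
      (adj2.homEquiv (R.obj (SA.S.obj a)) b).symm)

lemma phiAB_left (a' a : A) (b : B) (f : a' ⟶ a) (g : a ⟶ j.obj b) :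
    phiAB j R adj SA a' b (f ≫ g)
      = j.map (R.map (SA.S.map f)) ≫ phiAB j R adj SA a b g := by
  apply phi_ext SA
  intro h'
  rw [phiAB_char, SA.nat_left f g]
  rw [← SA.nat_right h' (j.map (R.map (SA.S.map f))) (phiAB j R adj SA a b g)]
  rw [phiAB_char]
  congr 1
  rw [Category.assoc, Category.assoc]
  congr 1
  exact (adj.counit.naturality (SA.S.map f)).symm

lemma phiAB_right (a : A) (b b' : B) (h : a ⟶ j.obj b) (v : b ⟶ b') :
    phiAB j R adj SA a b' (h ≫ j.map v)
      = phiAB j R adj SA a b h ≫ SA.S.map (j.map v) := by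
  apply phi_ext SA
  intro h''
  rw [phiAB_char, SA.nat_right h (j.map v)]
  rw [← SA.nat_left (j.map v) h'' (phiAB j R adj SA a b h)]
  rw [phiAB_char, Category.assoc]

lemma chain_left (a' a : A) (b : B) (f : a' ⟶ a) (g : a ⟶ j.obj b) :
    chain j R adj SA E adj2 a' b (f ≫ g)
      = E.map (R.map (SA.S.map f)) ≫ chain j R adj SA E adj2 a b g := by
  show (adj2.homEquiv _ b).symm (adj.homEquiv _ _ (phiAB j R adj SA a' b (f ≫ g))) = _
  rw [phiAB_left, adj.homEquiv_naturality_left,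
    Adjunction.homEquiv_naturality_left_symm]
  rfl

lemma chain_right (a : A) (b b' : B) (h : a ⟶ j.obj b) (v : b ⟶ b') :
    chain j R adj SA E adj2 a b' (h ≫ j.map v)
      = chain j R adj SA E adj2 a b h ≫ v := by
  show (adj2.homEquiv _ b').symm (adj.homEquiv _ _ (phiAB j R adj SA a b' (h ≫ j.map v))) = _
  rw [phiAB_right, adj.homEquiv_naturality_right]
  have hG : R.map (SA.S.map (j.map v)) = (j ⋙ SA.S ⋙ R).map v := rfl
  rw [hG, Adjunction.homEquiv_naturality_right_symm]
  rfl

end SerreAux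

theorem left_adjoint_of_serre
    (k : Type v) [Field k]
    {A : Type u} [Category.{v} A] [Preadditive A] [Linear k A]
    [Limits.HasZeroObject A] [HasShift A ℤ] [∀ n : ℤ, (shiftFunctor A n).Additive]
    [Pretriangulated A] [∀ a b : A, FiniteDimensional k (a ⟶ b)]
    {B : Type u'} [Category.{v} B] [Preadditive B] [Linear k B]
    [Limits.HasZeroObject B] [HasShift B ℤ] [∀ n : ℤ, (shiftFunctor B n).Additive]
    [Pretriangulated B]
    (j : B ⥤ A) [j.Full] [j.Faithful] [j.Additive] [j.Linear k]
    [j.CommShift ℤ] [j.IsTriangulated]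
    (R : A ⥤ B) (adj : j ⊣ R)
    (SA : SerreStructure k A) (SB : SerreStructure k B)
    (hSB : SB.S = j ⋙ SA.S ⋙ R)
    -- `e` realizes `S_B` as an equivalence, so that `e.inverse` is `S_B⁻¹`
    (e : B ≌ B) (he : e.functor = SB.S) :
    Nonempty ((SA.S ⋙ R ⋙ e.inverse) ⊣ j) := by
  have H : e.functor = j ⋙ SA.S ⋙ R := he.trans hSB
  let adj2 : e.inverse ⊣ (j ⋙ SA.S ⋙ R) :=
    (e.changeFunctor (eqToIso H)).symm.toAdjunction
  refine ⟨Adjunction.mkOfHomEquiv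
    { homEquiv := fun a b => (SerreAux.chain j R adj SA e.inverse adj2 a b).symm
      homEquiv_naturality_left_symm := ?_
      homEquiv_naturality_right := ?_ }⟩
  · intro a' a b f g
    simp only [Equiv.symm_symm]
    exact SerreAux.chain_left j R adj SA e.inverse adj2 a' a b f g
  · intro a b b' f g
    apply (SerreAux.chain j R adj SA e.inverse adj2 a b').injective
    beta_reduce
    erw [Equiv.apply_symm_apply, SerreAux.chain_right, Equiv.apply_symm_apply]
end

section
/- Let D be a k-linear triangulated category with Serre functor S, and suppose D = ⟨C', D'⟩ is a semi-orthogonal decomposition such that S(c) ≅ c[n] for every c ∈ C' (for some fixed integer n). Then Hom(c, d) = 0 for all c ∈ C', d ∈ D', hence D = C' ⊕ D' is an orthogonal (direct sum) decomposition. -/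
/-!
STATEMENT 12: If `D` is `k`-linear triangulated with Serre functor `S`, and
`D = ⟨C', D'⟩` is a semi-orthogonal decomposition with `S(c) ≅ c⟦n⟧` for all `c ∈ C'`
(fixed `n`), then `Hom(c, d) = 0` for `c ∈ C'`, `d ∈ D'`, hence `D = C' ⊕ D'` is an
orthogonal (direct sum) decomposition.
-/

open CategoryTheory CategoryTheory.Pretriangulated

universe v u

theorem orthogonal_of_serre_shift_on_piece
    (k : Type v) [Field k]
    {D : Type u} [Category.{v} D] [Preadditive D] [Linear k D]
    [Limits.HasZeroObject D] [HasShift D ℤ] [∀ n : ℤ, (shiftFunctor D n).Additive]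
    [Pretriangulated D] [Limits.HasBinaryBiproducts D]
    [∀ a b : D, FiniteDimensional k (a ⟶ b)]
    (S : SerreStructure k D)
    (C' D' : Set D)
    (hC'shift : ∀ c ∈ C', ∀ m : ℤ, (c⟦m⟧ : D) ∈ C')
    -- semi-orthogonality: `Hom(d, c) = 0` for `d ∈ D'`, `c ∈ C'`
    (hsemi : ∀ d ∈ D', ∀ c ∈ C', ∀ f : d ⟶ c, f = 0)
    -- decomposition: every object sits in a triangle `d → a → c → d⟦1⟧`
    (hdec : ∀ a : D, ∃ d ∈ D', ∃ c ∈ C', ∃ (i : d ⟶ a) (q : a ⟶ c) (w : c ⟶ d⟦(1:ℤ)⟧),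
      Triangle.mk i q w ∈ distTriang D)
    (n : ℤ)
    (hS : ∀ c ∈ C', Nonempty (S.S.obj c ≅ (c⟦n⟧ : D))) :
    (∀ c ∈ C', ∀ d ∈ D', ∀ f : c ⟶ d, f = 0) ∧
    (∀ a : D, ∃ c ∈ C', ∃ d ∈ D', Nonempty (a ≅ c ⊞ d)) := by
  have horth : ∀ c ∈ C', ∀ d ∈ D', ∀ f : c ⟶ d, f = 0 := by
    intro c hc d hd f
    obtain ⟨e⟩ := hS c hc
    have hz : ∀ g : d ⟶ S.S.obj c, g = 0 := by
      intro g
      have h1 : g ≫ e.hom = 0 := hsemi d hd _ (hC'shift c hc n) _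
      have : g = (g ≫ e.hom) ≫ e.inv := by simp
      rw [this, h1, Limits.zero_comp]
    have hφ : S.φ c d f = S.φ c d 0 := by
      ext g
      simp [hz g]
    exact (S.φ c d).injective hφ
  refine ⟨horth, fun a => ?_⟩
  obtain ⟨d, hd, c, hc, i, q, w, hT⟩ := hdec a
  have hw : w = 0 := by
    have hmap : (shiftFunctor D (-1 : ℤ)).map w ≫
        ((shiftFunctorCompIsoId D (1 : ℤ) (-1 : ℤ) (by ring)).hom.app d) = 0 :=
      horth _ (hC'shift c hc (-1)) d hd _
    have h2 : (shiftFunctor D (-1 : ℤ)).map w = 0 := by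
      rw [← cancel_mono ((shiftFunctorCompIsoId D (1 : ℤ) (-1 : ℤ) (by ring)).hom.app d),
        hmap, Limits.zero_comp]
    have : (shiftFunctor D (-1 : ℤ)).map w = (shiftFunctor D (-1 : ℤ)).map 0 := by
      rw [h2, Functor.map_zero]
    exact (shiftFunctor D (-1 : ℤ)).map_injective this
  obtain ⟨e, -, -⟩ := exists_iso_binaryBiproduct_of_distTriang _ hT hw
  exact ⟨c, hc, d, hd, ⟨e ≪≫ (Limits.biprod.braiding d c)⟩⟩
end
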